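/- For ψ ∈ L²(ℝ²), the admissibility condition 0 < C_ψ = ∫_{ℝ²} |𝓕ψ(ξ)|² / |ξ₁|² dξ < ∞ holds if and only if for a.e. ξ ∈ ℝ²∖{0}, ∫_{ℝ^×} ∫_ℝ |𝓕ψ(A_a ᵗN_s ξ)|² ds da/|a|^{3/2} = C_ψ (the same finite positive constant, independent of ξ). -/

import Mathlib

open MeasureTheory Complex
open scoped FourierTransform

noncomputable section

abbrev E2 := EuclideanSpace ℝ (Fin 2)

def e2 (u v : ℝ) : E2 := (WithLp.equiv 2 (Fin 2 → ℝ)).symm ![u, v]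

/-- the frequency point A_a ᵗN_s ξ = (aξ₁, a|a|^{-1/2}(ξ₂ - sξ₁)) -/
def freqPt (s a : ℝ) (ξ : E2) : E2 :=
  e2 (a * ξ 0) (a / Real.sqrt |a| * (ξ 1 - s * ξ 0))

/-!
For fixed `ξ` with `ξ₁ ≠ 0`, the map `(s, a) ↦ A_a ᵗN_s ξ` is a diffeomorphism of `{a ≠ 0}`
onto `{η₁ ≠ 0}` with Jacobian determinant `ξ₁² a |a|^{-1/2}`. Since
`|a ξ₁|⁻² · ξ₁² |a|^{1/2} = |a|^{-3/2}`, the change of variables turns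
`∫∫ F(A_a ᵗN_s ξ) ds da / |a|^{3/2}` into `∫ F(η) / η₁² dη` for every `F`, integrability
included. Both sides of the equivalence therefore say that this integral is the positive number
`C`, the double integral being taken at any `ξ` off the null set `{ξ₁ = 0}`.
-/

lemma MeasureTheory.Measure.ae_ne_zero_of_linearMap_ne_zero {E : Type*} [NormedAddCommGroup E]
    [NormedSpace ℝ E] [MeasurableSpace E] [BorelSpace E] [FiniteDimensional ℝ E]
    (μ : Measure E) [μ.IsAddHaarMeasure] {f : E →ₗ[ℝ] ℝ} (hf : f ≠ 0) :
    ∀ᵐ v ∂μ, f v ≠ 0 := by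
  rw [ae_iff]
  simp only [not_not]
  exact Measure.addHaar_submodule μ (LinearMap.ker f) (mt LinearMap.ker_eq_top.1 hf)

lemma ContinuousLinearMap.det_prod_smul_fst_add_smul_snd (a b c d : ℝ) :
    ((a • fst ℝ ℝ ℝ + b • snd ℝ ℝ ℝ).prod (c • fst ℝ ℝ ℝ + d • snd ℝ ℝ ℝ)).det
      = a * d - b * c := by
  rw [ContinuousLinearMap.det, ← LinearMap.det_toMatrix (Module.Basis.finTwoProd ℝ),
    Matrix.det_fin_two]
  simp [LinearMap.toMatrix_apply, Module.Basis.finTwoProd_zero, Module.Basis.finTwoProd_one,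
    Module.Basis.coe_finTwoProd_repr]

namespace Shearlet

lemma ae_snd_ne_zero : ∀ᵐ p : ℝ × ℝ, p.2 ≠ 0 :=
  Measure.ae_ne_zero_of_linearMap_ne_zero volume (f := LinearMap.snd ℝ ℝ ℝ) fun h => by
    simpa using LinearMap.congr_fun h (0, 1)

lemma ae_fst_ne_zero : ∀ᵐ q : ℝ × ℝ, q.1 ≠ 0 :=
  Measure.ae_ne_zero_of_linearMap_ne_zero volume (f := LinearMap.fst ℝ ℝ ℝ) fun h => by
    simpa using LinearMap.congr_fun h (1, 0)

lemma ae_apply_zero_ne_zero : ∀ᵐ ξ : E2, ξ 0 ≠ 0 :=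
  Measure.ae_ne_zero_of_linearMap_ne_zero volume
    (f := EuclideanSpace.projₗ (0 : Fin 2)) fun h => by
    simpa [e2] using LinearMap.congr_fun h (e2 1 0)

lemma measurableSet_snd_ne_zero : MeasurableSet {p : ℝ × ℝ | p.2 ≠ 0} :=
  (measurable_snd (measurableSet_singleton 0)).compl

lemma restrict_snd_ne_zero : (volume : Measure (ℝ × ℝ)).restrict {p | p.2 ≠ 0} = volume :=
  Measure.restrict_eq_self_of_ae_mem ae_snd_ne_zero

lemma restrict_fst_ne_zero : (volume : Measure (ℝ × ℝ)).restrict {q | q.1 ≠ 0} = volume :=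
  Measure.restrict_eq_self_of_ae_mem ae_fst_ne_zero

def shearMap (x y : ℝ) (p : ℝ × ℝ) : ℝ × ℝ :=
  (p.2 * x, p.2 / √|p.2| * (y - p.1 * x))

lemma hasFDerivAt_shearMap (x y : ℝ) {p : ℝ × ℝ} (hp : p.2 ≠ 0) :
    HasFDerivAt (shearMap x y)
      (((0 : ℝ) • ContinuousLinearMap.fst ℝ ℝ ℝ + x • ContinuousLinearMap.snd ℝ ℝ ℝ).prod
        ((-(x * (p.2 / √|p.2|))) • ContinuousLinearMap.fst ℝ ℝ ℝ +
          ((y - p.1 * x) * deriv (fun a : ℝ => a / √|a|) p.2) • ContinuousLinearMap.snd ℝ ℝ ℝ))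
      p := by
  have hφ : DifferentiableAt ℝ (fun a : ℝ => a / √|a|) p.2 :=
    differentiableAt_id.div ((differentiableAt_abs hp).sqrt (abs_ne_zero.2 hp))
      (by positivity)
  have h₁ := (hasFDerivAt_snd (𝕜 := ℝ) (p := p)).mul_const x
  have h₂ := (hφ.hasDerivAt.comp_hasFDerivAt p (hasFDerivAt_snd (𝕜 := ℝ))).mul
    (((hasFDerivAt_fst (𝕜 := ℝ) (p := p)).mul_const x).const_sub y)
  refine (h₁.prodMk h₂).congr_fderiv ?_
  ext <;> simp
  ring

lemma det_fderiv_shearMap (x y : ℝ) {p : ℝ × ℝ} (hp : p.2 ≠ 0) :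
    (fderiv ℝ (shearMap x y) p).det = x ^ 2 * (p.2 / √|p.2|) := by
  rw [(hasFDerivAt_shearMap x y hp).fderiv,
    ContinuousLinearMap.det_prod_smul_fst_add_smul_snd]
  ring

lemma hasFDerivWithinAt_shearMap (x y : ℝ) :
    ∀ p ∈ {p : ℝ × ℝ | p.2 ≠ 0},
      HasFDerivWithinAt (shearMap x y) (fderiv ℝ (shearMap x y) p) {p | p.2 ≠ 0} p :=
  fun _ hp => (hasFDerivAt_shearMap x y hp).differentiableAt.hasFDerivAt.hasFDerivWithinAt

lemma injOn_shearMap {x : ℝ} (y : ℝ) (hx : x ≠ 0) : Set.InjOn (shearMap x y) {p | p.2 ≠ 0} := by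
  rintro ⟨s, a⟩ (ha : a ≠ 0) ⟨s', a'⟩ - h
  simp only [shearMap, Prod.mk.injEq] at h
  obtain ⟨rfl, h⟩ := h.imp_left (mul_right_cancel₀ hx)
  have hs : s * x = s' * x := by
    have := mul_left_cancel₀ (div_ne_zero ha (by positivity : √|a| ≠ 0)) h
    linarith
  rw [mul_right_cancel₀ hx hs]

lemma image_shearMap {x : ℝ} (y : ℝ) (hx : x ≠ 0) :
    shearMap x y '' {p | p.2 ≠ 0} = {q : ℝ × ℝ | q.1 ≠ 0} := by
  ext q
  constructor
  · rintro ⟨p, hp, rfl⟩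
    exact mul_ne_zero hp hx
  · intro (hq : q.1 ≠ 0)
    set a := q.1 / x
    have ha : a ≠ 0 := div_ne_zero hq hx
    have hs : √|a| ≠ 0 := by positivity
    refine ⟨((y - q.2 * √|a| / a) / x, a), ha, Prod.ext ?_ ?_⟩
    · exact div_mul_cancel₀ _ hx
    · simp only [shearMap, div_mul_cancel₀ _ hx, sub_sub_cancel]
      field_simp

lemma abs_jacobian_div_sq {x a : ℝ} (hx : x ≠ 0) (ha : a ≠ 0) :
    |x ^ 2 * (a / √|a|)| / (a * x) ^ 2 = |a| ^ (-(3 : ℝ) / 2) := by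
  have hpos : 0 < |a| := abs_pos.2 ha
  have hsqrt : 0 < √|a| := Real.sqrt_pos.2 hpos
  rw [abs_mul, abs_div, abs_of_pos hsqrt, abs_pow, sq_abs, Real.div_sqrt,
    show (-(3 : ℝ) / 2) = 1 / 2 - 2 by norm_num, Real.rpow_sub hpos, ← Real.sqrt_eq_rpow,
    Real.rpow_two, sq_abs]
  field_simp

lemma eqOn_abs_det_fderiv_shearMap_smul {x : ℝ} (y : ℝ) (hx : x ≠ 0) (G : ℝ × ℝ → ℝ) :
    Set.EqOn
      (fun p => |(fderiv ℝ (shearMap x y) p).det| • (G (shearMap x y p) / (shearMap x y p).1 ^ 2))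
      (fun p => G (shearMap x y p) * |p.2| ^ (-(3 : ℝ) / 2)) {p | p.2 ≠ 0} := by
  intro p (hp : p.2 ≠ 0)
  dsimp only
  rw [smul_eq_mul, det_fderiv_shearMap x y hp, ← abs_jacobian_div_sq hx hp]
  simp only [shearMap]
  ring

theorem integral_shearMap {x : ℝ} (y : ℝ) (hx : x ≠ 0) (G : ℝ × ℝ → ℝ) :
    ∫ p, G (shearMap x y p) * |p.2| ^ (-(3 : ℝ) / 2) = ∫ q, G q / q.1 ^ 2 :=
  calc ∫ p, G (shearMap x y p) * |p.2| ^ (-(3 : ℝ) / 2)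
      = ∫ p in {p | p.2 ≠ 0}, G (shearMap x y p) * |p.2| ^ (-(3 : ℝ) / 2) := by
        rw [restrict_snd_ne_zero]
    _ = ∫ p in {p | p.2 ≠ 0}, |(fderiv ℝ (shearMap x y) p).det| •
          (G (shearMap x y p) / (shearMap x y p).1 ^ 2) :=
        (setIntegral_congr_fun measurableSet_snd_ne_zero
          (eqOn_abs_det_fderiv_shearMap_smul y hx G)).symm
    _ = ∫ q in shearMap x y '' {p | p.2 ≠ 0}, G q / q.1 ^ 2 :=
        (integral_image_eq_integral_abs_det_fderiv_smul volume measurableSet_snd_ne_zero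
          (hasFDerivWithinAt_shearMap x y) (injOn_shearMap y hx) fun q => G q / q.1 ^ 2).symm
    _ = ∫ q, G q / q.1 ^ 2 := by rw [image_shearMap y hx, restrict_fst_ne_zero]

theorem integrable_shearMap_iff {x : ℝ} (y : ℝ) (hx : x ≠ 0) (G : ℝ × ℝ → ℝ) :
    Integrable (fun p => G (shearMap x y p) * |p.2| ^ (-(3 : ℝ) / 2)) ↔
      Integrable (fun q => G q / q.1 ^ 2) :=
  calc Integrable (fun p => G (shearMap x y p) * |p.2| ^ (-(3 : ℝ) / 2))
      ↔ IntegrableOn (fun p => G (shearMap x y p) * |p.2| ^ (-(3 : ℝ) / 2)) {p | p.2 ≠ 0} := by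
        rw [IntegrableOn, restrict_snd_ne_zero]
    _ ↔ IntegrableOn (fun p => |(fderiv ℝ (shearMap x y) p).det| •
          (G (shearMap x y p) / (shearMap x y p).1 ^ 2)) {p | p.2 ≠ 0} :=
        (integrableOn_congr_fun (eqOn_abs_det_fderiv_shearMap_smul y hx G)
          measurableSet_snd_ne_zero).symm
    _ ↔ IntegrableOn (fun q => G q / q.1 ^ 2) (shearMap x y '' {p | p.2 ≠ 0}) :=
        (integrableOn_image_iff_integrableOn_abs_det_fderiv_smul volume measurableSet_snd_ne_zero
          (hasFDerivWithinAt_shearMap x y) (injOn_shearMap y hx) fun q => G q / q.1 ^ 2).symm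
    _ ↔ Integrable (fun q => G q / q.1 ^ 2) := by
        rw [image_shearMap y hx, IntegrableOn, restrict_fst_ne_zero]

def measurableEquivE2 : (ℝ × ℝ) ≃ᵐ E2 :=
  MeasurableEquiv.finTwoArrow.symm.trans (MeasurableEquiv.toLp 2 (Fin 2 → ℝ))

lemma freqPt_eq_measurableEquivE2_shearMap (s a : ℝ) (ξ : E2) :
    freqPt s a ξ = measurableEquivE2 (shearMap (ξ 0) (ξ 1) (s, a)) := rfl

lemma measurePreserving_measurableEquivE2 : MeasurePreserving measurableEquivE2 :=
  (EuclideanSpace.volume_preserving_symm_measurableEquiv_toLp (Fin 2)).symm.comp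
    (volume_preserving_finTwoArrow ℝ).symm

lemma integral_freqPt {ξ : E2} (hξ : ξ 0 ≠ 0) (F : E2 → ℝ) :
    ∫ p : ℝ × ℝ, F (freqPt p.1 p.2 ξ) * |p.2| ^ (-(3 : ℝ) / 2) = ∫ η, F η / η 0 ^ 2 := by
  simp only [freqPt_eq_measurableEquivE2_shearMap, Prod.mk.eta]
  rw [← measurePreserving_measurableEquivE2.integral_comp'
    (g := fun η : E2 => F η / η 0 ^ 2)]
  exact integral_shearMap (ξ 1) hξ (F ∘ measurableEquivE2)

lemma integrable_freqPt_iff {ξ : E2} (hξ : ξ 0 ≠ 0) (F : E2 → ℝ) :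
    Integrable (fun p : ℝ × ℝ => F (freqPt p.1 p.2 ξ) * |p.2| ^ (-(3 : ℝ) / 2)) ↔
      Integrable (fun η => F η / η 0 ^ 2) := by
  simp only [freqPt_eq_measurableEquivE2_shearMap, Prod.mk.eta]
  rw [← measurePreserving_measurableEquivE2.integrable_comp_emb
    measurableEquivE2.measurableEmbedding]
  exact integrable_shearMap_iff (ξ 1) hξ (F ∘ measurableEquivE2)

end Shearlet

open Shearlet

theorem admissibility_iff_general (ψ : E2 → ℂ) (C : ℝ) :
    (0 < C ∧ Integrable (fun ξ : E2 => ‖𝓕 ψ ξ‖ ^ 2 / (ξ 0) ^ 2) ∧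
        (∫ ξ : E2, ‖𝓕 ψ ξ‖ ^ 2 / (ξ 0) ^ 2) = C) ↔
      (0 < C ∧ ∀ᵐ ξ : E2, ξ ≠ 0 →
        (∫ p : ℝ × ℝ, ‖𝓕 ψ (freqPt p.1 p.2 ξ)‖ ^ 2 * |p.2| ^ (-(3:ℝ)/2)) = C) := by
  let F : E2 → ℝ := fun η => ‖𝓕 ψ η‖ ^ 2
  constructor
  · rintro ⟨hC, -, hF⟩
    refine ⟨hC, ?_⟩
    filter_upwards [ae_apply_zero_ne_zero] with ξ hξ _
    rw [integral_freqPt hξ F, hF]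
  · rintro ⟨hC, hae⟩
    obtain ⟨ξ, hξC, hξ⟩ := (hae.and ae_apply_zero_ne_zero).exists
    replace hξC := hξC (by rintro rfl; exact hξ rfl)
    have hint : Integrable fun p : ℝ × ℝ => F (freqPt p.1 p.2 ξ) * |p.2| ^ (-(3 : ℝ) / 2) := by
      by_contra h
      rw [integral_undef h] at hξC
      exact hC.ne hξC
    rw [integral_freqPt hξ F] at hξC
    exact ⟨hC, (integrable_freqPt_iff hξ F).1 hint, hξC⟩

/-- equivalence of the two forms of the shearlet admissibility condition. -/
theorem admissibility_iff (ψ : E2 → ℂ) (hψ : MemLp ψ 2 volume) (C : ℝ) :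
    (0 < C ∧ Integrable (fun ξ : E2 => ‖𝓕 ψ ξ‖ ^ 2 / (ξ 0) ^ 2) ∧
        (∫ ξ : E2, ‖𝓕 ψ ξ‖ ^ 2 / (ξ 0) ^ 2) = C) ↔
      (0 < C ∧ ∀ᵐ ξ : E2, ξ ≠ 0 →
        (∫ p : ℝ × ℝ, ‖𝓕 ψ (freqPt p.1 p.2 ξ)‖ ^ 2 * |p.2| ^ (-(3:ℝ)/2)) = C) :=
  admissibility_iff_general ψ C
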